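/- For every positive integer n and every choice of letters x₁,…,xₙ ∈ A, the minimum component of the Viterbi state Sⁿ satisfies min Sⁿ = card({1 ≤ i ≤ n : V(S̃^{i−1}, xᵢ) ∉ 𝒮_G}). -/
import Mathlib


/-- Hamming distance on the alphabet `A`. -/
def ham {A : Type*} [DecidableEq A] (x y : A) : ℕ := if x = y then 0 else 1

/-- `EdgeChain src dst n e` : the first `n` edges of the edge sequence `e` form a
directed path in the labelled graph with source map `src` and destination map `dst`. -/
def EdgeChain {V E : Type*} (src dst : E → V) (n : ℕ) (e : ℕ → E) : Prop :=
  ∀ i : ℕ, i + 1 < n → dst (e i) = src (e (i + 1))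

/-- The graph is strongly connected: for any ordered pair of vertices there is a
(nonempty) directed path from the first to the second. -/
def StronglyConnected {V E : Type*} (src dst : E → V) : Prop :=
  ∀ u v : V, ∃ (l : List E) (h : l ≠ []),
    List.Chain' (fun e f => dst e = src f) l ∧ src (l.head h) = u ∧ dst (l.getLast h) = v

/-- The Viterbi transition operator `V` : `Vop src dst lab s x v` is the minimum of
`s (src e) + d(x, lab e)` over all edges `e` ending at `v`. -/
noncomputable def Vop {V E A : Type*} [DecidableEq A] (src dst : E → V) (lab : E → A)
    (s : V → ℕ) (x : A) : V → ℕ :=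
  fun v => sInf {m : ℕ | ∃ e : E, dst e = v ∧ m = s (src e) + ham x (lab e)}

/-- Minimum component of a state. -/
noncomputable def minS {V : Type*} (s : V → ℕ) : ℕ := sInf (Set.range s)

/-- The reduced Viterbi transition operator `Ṽ`: subtract from `V(s,x)` its minimum
component. -/
noncomputable def Vred {V E A : Type*} [DecidableEq A] (src dst : E → V) (lab : E → A)
    (s : V → ℕ) (x : A) : V → ℕ :=
  fun v => Vop src dst lab s x v - minS (Vop src dst lab s x)

/-- The Viterbi state sequence: `S⁰` is the zero state and `Sⁱ = V(S^{i-1}, xᵢ)`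
(the letter `xᵢ` of the paper is `x (i-1)` here). -/
noncomputable def VSeq {V E A : Type*} [DecidableEq A] (src dst : E → V) (lab : E → A)
    (x : ℕ → A) : ℕ → V → ℕ
  | 0 => fun _ => 0
  | i + 1 => Vop src dst lab (VSeq src dst lab x i) (x i)

/-- The reduced Viterbi state sequence `S̃ⁱ(v) = Sⁱ(v) - min Sⁱ`. -/
noncomputable def SredSeq {V E A : Type*} [DecidableEq A] (src dst : E → V) (lab : E → A)
    (x : ℕ → A) (i : ℕ) : V → ℕ :=
  fun v => VSeq src dst lab x i v - minS (VSeq src dst lab x i)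

/-- The state space `𝒮_G`: the zero state together with everything obtainable from it
by finitely many applications of the reduced Viterbi transition operator. -/
def SG {V E A : Type*} [DecidableEq A] (src dst : E → V) (lab : E → A) : Set (V → ℕ) :=
  { s | ∃ l : List A, s = l.foldl (Vred src dst lab) (fun _ => 0) }

/-- `PrimIndex src dst k` : `k` is positive and any vertex can be reached from any
vertex by a directed path of length exactly `k`. -/
def PrimIndex {V E : Type*} (src dst : E → V) (k : ℕ) : Prop :=
  0 < k ∧ ∀ u v : V, ∃ e : ℕ → E,
    EdgeChain src dst k e ∧ src (e 0) = u ∧ dst (e (k - 1)) = v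

/-- Minimum total Hamming distortion over all directed paths of length `n`. -/
noncomputable def minDist {V E A : Type*} [DecidableEq A] (src dst : E → V) (lab : E → A)
    (n : ℕ) (x : Fin n → A) : ℕ :=
  sInf {m : ℕ | ∃ e : ℕ → E, EdgeChain src dst n e ∧
    m = ∑ i : Fin n, ham (x i) (lab (e i.1))}

/-- `aSeq src dst lab p n` is the expected minimum path distortion
`a_n = E[ min_{paths} Σ d(Xᵢ, L(eᵢ)) ]` for the i.i.d. source with letter distribution `p`. -/
noncomputable def aSeq {V E A : Type*} [DecidableEq A] [Fintype A] (src dst : E → V)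
    (lab : E → A) (p : A → ℝ) (n : ℕ) : ℝ :=
  ∑ x : Fin n → A, (∏ i, p (x i)) * (minDist src dst lab n x : ℝ)

section AuxLemmas

variable {V E A : Type*} [Fintype V] [Nonempty V] [Fintype E] [Fintype A] [DecidableEq A]
variable (src dst : E → V) (lab : E → A)

lemma ham_le_one (x y : A) : ham x y ≤ 1 := by
  unfold ham; split <;> omega

lemma exists_edge_to (hconn : StronglyConnected src dst) (v : V) : ∃ e : E, dst e = v := by
  obtain ⟨l, h, _, _, hd⟩ := hconn v v
  exact ⟨l.getLast h, hd⟩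

lemma exists_edge_from (hconn : StronglyConnected src dst) (v : V) : ∃ e : E, src e = v := by
  obtain ⟨l, h, _, hs, _⟩ := hconn v v
  exact ⟨l.head h, hs⟩

lemma VopSet_nonempty (hconn : StronglyConnected src dst) (s : V → ℕ) (x : A) (v : V) :
    {m : ℕ | ∃ e : E, dst e = v ∧ m = s (src e) + ham x (lab e)}.Nonempty := by
  obtain ⟨e, he⟩ := exists_edge_to src dst hconn v
  exact ⟨s (src e) + ham x (lab e), e, he, rfl⟩

lemma Vop_mem (hconn : StronglyConnected src dst) (s : V → ℕ) (x : A) (v : V) :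
    ∃ e : E, dst e = v ∧ Vop src dst lab s x v = s (src e) + ham x (lab e) :=
  Nat.sInf_mem (VopSet_nonempty src dst lab hconn s x v)

lemma Vop_le (s : V → ℕ) (x : A) {v : V} {e : E} (he : dst e = v) :
    Vop src dst lab s x v ≤ s (src e) + ham x (lab e) :=
  Nat.sInf_le ⟨e, he, rfl⟩

lemma minS_le (s : V → ℕ) (v : V) : minS s ≤ s v :=
  Nat.sInf_le ⟨v, rfl⟩

lemma exists_minS (s : V → ℕ) : ∃ v : V, s v = minS s :=
  Nat.sInf_mem (Set.range_nonempty s)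

lemma minS_sub (s : V → ℕ) (m : ℕ) : minS (fun v => s v - m) = minS s - m := by
  apply le_antisymm
  · obtain ⟨v, hv⟩ := exists_minS s
    calc minS (fun v => s v - m) ≤ s v - m := minS_le _ v
    _ = minS s - m := by rw [hv]
  · obtain ⟨v, hv⟩ := exists_minS (fun v => s v - m)
    calc minS s - m ≤ s v - m := Nat.sub_le_sub_right (minS_le s v) m
    _ = minS (fun v => s v - m) := hv

lemma minS_zero : minS (fun _ : V => (0 : ℕ)) = 0 :=
  Nat.le_zero.mp (minS_le _ (Classical.arbitrary V))

lemma Vop_sub (hconn : StronglyConnected src dst) (s : V → ℕ) (m : ℕ)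
    (hm : ∀ v, m ≤ s v) (x : A) (v : V) :
    Vop src dst lab (fun w => s w - m) x v = Vop src dst lab s x v - m := by
  apply le_antisymm
  · obtain ⟨e, he, hval⟩ := Vop_mem src dst lab hconn s x v
    calc Vop src dst lab (fun w => s w - m) x v ≤ (s (src e) - m) + ham x (lab e) :=
          Vop_le src dst lab _ x he
    _ = Vop src dst lab s x v - m := by rw [hval]; have := hm (src e); omega
  · obtain ⟨e, he, hval⟩ := Vop_mem src dst lab hconn (fun w => s w - m) x v
    have h1 : Vop src dst lab s x v ≤ s (src e) + ham x (lab e) :=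
      Vop_le src dst lab s x he
    have h2 := hm (src e)
    omega

lemma minS_le_Vop (hconn : StronglyConnected src dst) (s : V → ℕ) (x : A) (v : V) :
    minS s ≤ Vop src dst lab s x v := by
  obtain ⟨e, _, hval⟩ := Vop_mem src dst lab hconn s x v
  calc minS s ≤ s (src e) := minS_le s _
  _ ≤ _ := by omega

lemma minS_mono_step (hconn : StronglyConnected src dst) (s : V → ℕ) (x : A) :
    minS s ≤ minS (Vop src dst lab s x) := by
  obtain ⟨v, hv⟩ := exists_minS (Vop src dst lab s x)
  rw [← hv]; exact minS_le_Vop src dst lab hconn s x v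

lemma minS_Vop_le (hconn : StronglyConnected src dst) (s : V → ℕ) (x : A) :
    minS (Vop src dst lab s x) ≤ minS s + 1 := by
  obtain ⟨v0, hv0⟩ := exists_minS s
  obtain ⟨e, he⟩ := exists_edge_from src dst hconn v0
  calc minS (Vop src dst lab s x) ≤ Vop src dst lab s x (dst e) := minS_le _ _
  _ ≤ s (src e) + ham x (lab e) := Vop_le src dst lab s x rfl
  _ ≤ minS s + 1 := by have := ham_le_one x (lab e); rw [he, hv0] at *; omega

lemma minS_Vred (s : V → ℕ) (x : A) : minS (Vred src dst lab s x) = 0 := by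
  unfold Vred
  rw [minS_sub, Nat.sub_self]

lemma minS_mem_SG {s : V → ℕ} (hs : s ∈ SG src dst lab) : minS s = 0 := by
  obtain ⟨l, rfl⟩ := hs
  induction l using List.reverseRecOn with
  | nil => exact minS_zero
  | append_singleton l y _ =>
      rw [List.foldl_append, List.foldl_cons, List.foldl_nil]
      exact minS_Vred src dst lab _ y

lemma SG_closed {s : V → ℕ} (hs : s ∈ SG src dst lab) (y : A) :
    Vred src dst lab s y ∈ SG src dst lab := by
  obtain ⟨l, rfl⟩ := hs
  exact ⟨l ++ [y], by rw [List.foldl_append, List.foldl_cons, List.foldl_nil]⟩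

lemma Vop_Sred (hconn : StronglyConnected src dst) (x : ℕ → A) (i : ℕ) (v : V) :
    Vop src dst lab (SredSeq src dst lab x i) (x i) v =
      VSeq src dst lab x (i + 1) v - minS (VSeq src dst lab x i) := by
  have := Vop_sub src dst lab hconn (VSeq src dst lab x i) (minS (VSeq src dst lab x i))
    (fun v => minS_le _ v) (x i) v
  exact this

lemma SredSeq_succ (hconn : StronglyConnected src dst) (x : ℕ → A) (i : ℕ) :
    SredSeq src dst lab x (i + 1) =
      Vred src dst lab (SredSeq src dst lab x i) (x i) := by
  funext v
  have hVop : Vop src dst lab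
      (fun w => VSeq src dst lab x i w - minS (VSeq src dst lab x i)) (x i) =
      fun v => VSeq src dst lab x (i + 1) v - minS (VSeq src dst lab x i) := by
    funext w; exact Vop_Sred src dst lab hconn x i w
  have hmono : minS (VSeq src dst lab x i) ≤ minS (VSeq src dst lab x (i + 1)) :=
    minS_mono_step src dst lab hconn _ (x i)
  have hle : minS (VSeq src dst lab x (i + 1)) ≤ VSeq src dst lab x (i + 1) v :=
    minS_le _ v
  unfold Vred SredSeq
  rw [hVop, minS_sub]
  beta_reduce
  omega

lemma SredSeq_mem_SG (hconn : StronglyConnected src dst) (x : ℕ → A) (i : ℕ) :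
    SredSeq src dst lab x i ∈ SG src dst lab := by
  induction i with
  | zero =>
      refine ⟨[], ?_⟩
      funext v
      simp [SredSeq, VSeq, minS_zero]
  | succ i ih =>
      rw [SredSeq_succ src dst lab hconn x i]
      exact SG_closed src dst lab ih (x i)

lemma mem_SG_iff (hconn : StronglyConnected src dst) (x : ℕ → A) (i : ℕ) :
    (Vop src dst lab (SredSeq src dst lab x i) (x i) ∈ SG src dst lab) ↔
      minS (VSeq src dst lab x (i + 1)) = minS (VSeq src dst lab x i) := by
  have hVop : Vop src dst lab (SredSeq src dst lab x i) (x i) =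
      fun v => VSeq src dst lab x (i + 1) v - minS (VSeq src dst lab x i) := by
    funext w; exact Vop_Sred src dst lab hconn x i w
  have hmono : minS (VSeq src dst lab x i) ≤ minS (VSeq src dst lab x (i + 1)) :=
    minS_mono_step src dst lab hconn _ (x i)
  have hminVop : minS (Vop src dst lab (SredSeq src dst lab x i) (x i)) =
      minS (VSeq src dst lab x (i + 1)) - minS (VSeq src dst lab x i) := by
    rw [hVop, minS_sub]
  constructor
  · intro hmem
    have h0 := minS_mem_SG src dst lab hmem
    rw [hminVop] at h0
    omega
  · intro heq
    have h0 : minS (Vop src dst lab (SredSeq src dst lab x i) (x i)) = 0 := by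
      rw [hminVop, heq, Nat.sub_self]
    have hVred : Vred src dst lab (SredSeq src dst lab x i) (x i) =
        Vop src dst lab (SredSeq src dst lab x i) (x i) := by
      funext v; unfold Vred; rw [h0, Nat.sub_zero]
    rw [← hVred]
    exact SG_closed src dst lab (SredSeq_mem_SG src dst lab hconn x i) (x i)

end AuxLemmas

open scoped Classical in
/-- For every positive `n` and letters `x₁,…,xₙ`,
`min Sⁿ = card({1 ≤ i ≤ n : V(S̃^{i-1}, xᵢ) ∉ 𝒮_G})`. -/
theorem min_viterbi_state_eq_card_exits_stateSpace
    {V E A : Type*} [Fintype V] [Nonempty V] [Fintype E] [Fintype A] [DecidableEq A]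
    (src dst : E → V) (lab : E → A) (hconn : StronglyConnected src dst)
    (n : ℕ) (hn : 0 < n) (x : ℕ → A) :
    minS (VSeq src dst lab x n) =
      ((Finset.range n).filter fun i =>
        Vop src dst lab (SredSeq src dst lab x i) (x i) ∉ SG src dst lab).card := by
  clear hn
  induction n with
  | zero => simp [VSeq, minS_zero]
  | succ n ih =>
      rw [Finset.range_add_one, Finset.filter_insert]
      by_cases h : Vop src dst lab (SredSeq src dst lab x n) (x n) ∈ SG src dst lab
      · have heq := (mem_SG_iff src dst lab hconn x n).mp h
        rw [if_neg (not_not_intro h), heq, ih]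
      · have hne : minS (VSeq src dst lab x (n + 1)) ≠ minS (VSeq src dst lab x n) :=
          fun hc => h ((mem_SG_iff src dst lab hconn x n).mpr hc)
        have h1 := minS_mono_step src dst lab hconn (VSeq src dst lab x n) (x n)
        have h2 := minS_Vop_le src dst lab hconn (VSeq src dst lab x n) (x n)
        have hstep : minS (VSeq src dst lab x (n + 1)) = minS (VSeq src dst lab x n) + 1 := by
          have : minS (VSeq src dst lab x (n+1)) = minS (Vop src dst lab (VSeq src dst lab x n) (x n)) := rfl
          omega
        rw [if_pos h, Finset.card_insert_of_notMem (by simp), hstep, ih]
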